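/- arXiv:1904.02918 — 7 statements merged into one kernel-verified Lean document; each statement's English description precedes it below -/
import Mathlib

section
/- Let n and m be natural numbers and let a : Fin n → ℚ and b : Fin m → ℚ be antitone. Then the following are equivalent: (1) m ≤ n and b j ≤ a j for every j < m (using the inclusion of indices j < m into Fin n); (2) for every μ ∈ ℚ, the number of indices j < m with μ ≤ b j is at most the number of indices i < n with μ ≤ a i. -/
/-- For antitone slope data `a : Fin n → ℚ` and `b : Fin m → ℚ`,
slopewise dominance (`m ≤ n` and `b j ≤ a j` for all `j < m`) is equivalent to
the rank inequalities `rk(W^{≥μ}) ≤ rk(V^{≥μ})` for all `μ`. -/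
theorem slopewise_dominance_iff_rank_ineq
    (n m : ℕ) (a : Fin n → ℚ) (b : Fin m → ℚ)
    (ha : Antitone a) (hb : Antitone b) :
    (∃ h : m ≤ n, ∀ j : Fin m, b j ≤ a (Fin.castLE h j)) ↔
      (∀ μ : ℚ,
        (Finset.univ.filter fun j : Fin m => μ ≤ b j).card ≤
          (Finset.univ.filter fun i : Fin n => μ ≤ a i).card) := by
  constructor
  · rintro ⟨h, hba⟩ μ
    apply Finset.card_le_card_of_injOn (Fin.castLE h)
    · intro j hj
      simp only [Finset.mem_coe, Finset.mem_filter, Finset.mem_univ, true_and] at *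
      exact hj.trans (hba j)
    · exact fun x _ y _ hxy => Fin.castLE_injective h hxy
  · intro H
    have hm : m ≤ n := by
      rcases Nat.eq_zero_or_pos m with hm0 | hm0
      · omega
      · set μ := b ⟨m - 1, by omega⟩ with hμ
        have hfull : (Finset.univ.filter fun j : Fin m => μ ≤ b j) = Finset.univ := by
          apply Finset.filter_true_of_mem
          intro j _
          exact hb (by simp [Fin.le_def]; omega)
        have := H μ
        rw [hfull] at this
        calc m = (Finset.univ : Finset (Fin m)).card := by simp
          _ ≤ _ := this
          _ ≤ (Finset.univ : Finset (Fin n)).card := Finset.card_le_card (Finset.filter_subset _ _)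
          _ = n := by simp
    refine ⟨hm, fun j => ?_⟩
    by_contra hlt
    push_neg at hlt
    set i : Fin n := Fin.castLE hm j with hi
    set μ := b j with hμ
    have h1 : Finset.Iic j ⊆ Finset.univ.filter fun k : Fin m => μ ≤ b k := by
      intro k hk
      simp only [Finset.mem_Iic] at hk
      simp only [Finset.mem_filter, Finset.mem_univ, true_and]
      exact hb hk
    have h2 : (Finset.univ.filter fun i' : Fin n => μ ≤ a i') ⊆ Finset.Iio i := by
      intro i' hi'
      simp only [Finset.mem_filter, Finset.mem_univ, true_and] at hi'
      simp only [Finset.mem_Iio]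
      by_contra hge
      push_neg at hge
      exact absurd (hi'.trans (ha hge)) (not_le.mpr hlt)
    have c1 : (j : ℕ) + 1 ≤ (Finset.univ.filter fun k : Fin m => μ ≤ b k).card := by
      have := Finset.card_le_card h1
      simpa using this
    have c2 : (Finset.univ.filter fun i' : Fin n => μ ≤ a i').card ≤ (i : ℕ) := by
      have := Finset.card_le_card h2
      simpa using this
    have := H μ
    have hival : (i : ℕ) = (j : ℕ) := rfl
    omega
end

section
/- Let n and m be natural numbers and let a : Fin n → ℚ and b : Fin m → ℚ be antitone. Then the following are equivalent: (1) m ≤ n and a (n−1−j) ≤ b (m−1−j) for every j < m; (2) for every μ ∈ ℚ, the number of indices j < m with b j ≤ μ is at most the number of indices i < n with a i ≤ μ. -/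
/-- For antitone slope data `a : Fin n → ℚ` and `b : Fin m → ℚ`,
dual slopewise dominance (`m ≤ n` and `a (n−1−j) ≤ b (m−1−j)` for all `j < m`)
is equivalent to the rank inequalities `rk(W^{≤μ}) ≤ rk(V^{≤μ})` for all `μ`. -/
theorem dual_slopewise_dominance_iff_rank_ineq
    (n m : ℕ) (a : Fin n → ℚ) (b : Fin m → ℚ)
    (ha : Antitone a) (hb : Antitone b) :
    (∃ h : m ≤ n, ∀ j : Fin m,
        a ⟨n - 1 - (j : ℕ), by have := j.isLt; omega⟩ ≤
          b ⟨m - 1 - (j : ℕ), by have := j.isLt; omega⟩) ↔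
      (∀ μ : ℚ,
        (Finset.univ.filter fun j : Fin m => b j ≤ μ).card ≤
          (Finset.univ.filter fun i : Fin n => a i ≤ μ).card) := by
  constructor
  · rintro ⟨h, hab⟩ μ
    have key : ∀ k : Fin m, a ⟨(k : ℕ) + (n - m), by have := k.isLt; omega⟩ ≤ b k := by
      intro k
      have hk := k.isLt
      have := hab ⟨m - 1 - (k : ℕ), by omega⟩
      have e1 : (⟨n - 1 - (m - 1 - (k : ℕ)), by omega⟩ : Fin n)
          = ⟨(k : ℕ) + (n - m), by omega⟩ := by ext; simp; omega
      have e2 : (⟨m - 1 - (m - 1 - (k : ℕ)), by omega⟩ : Fin m) = k := by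
        ext; simp; omega
      rw [e1, e2] at this
      exact this
    apply Finset.card_le_card_of_injOn
      (fun k : Fin m => (⟨(k : ℕ) + (n - m), by have := k.isLt; omega⟩ : Fin n))
    · intro k hk
      simp only [Finset.coe_filter, Finset.mem_coe, Set.mem_setOf_eq, Finset.mem_filter, Finset.mem_univ, true_and] at hk ⊢
      exact le_trans (key k) hk
    · intro x _ y _ hxy
      have : (x : ℕ) + (n - m) = (y : ℕ) + (n - m) := congrArg Fin.val hxy
      exact Fin.ext (by omega)
  · intro h2
    have hmn : m ≤ n := by
      rcases Nat.eq_zero_or_pos m with hm | hm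
      · omega
      · have hne : (Finset.univ : Finset (Fin m)).Nonempty :=
          ⟨⟨0, hm⟩, Finset.mem_univ _⟩
        set μ := Finset.univ.sup' hne b with hμ
        have h1 : (Finset.univ.filter fun j : Fin m => b j ≤ μ) = Finset.univ := by
          ext j
          simp [Finset.le_sup' b (Finset.mem_univ j)]
          exact Finset.le_sup' b (Finset.mem_univ j)
        have := h2 μ
        rw [h1] at this
        calc m = (Finset.univ : Finset (Fin m)).card := by simp
          _ ≤ (Finset.univ.filter fun i : Fin n => a i ≤ μ).card := this
          _ ≤ (Finset.univ : Finset (Fin n)).card :=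
              Finset.card_le_card (Finset.filter_subset _ _)
          _ = n := by simp
    refine ⟨hmn, fun j => ?_⟩
    have hj := j.isLt
    set μ := b ⟨m - 1 - (j : ℕ), by omega⟩ with hμ
    have hlow : (j : ℕ) + 1 ≤ (Finset.univ.filter fun k : Fin m => b k ≤ μ).card := by
      have hsub : Finset.Ici (⟨m - 1 - (j : ℕ), by omega⟩ : Fin m)
          ⊆ Finset.univ.filter fun k : Fin m => b k ≤ μ := by
        intro k hk
        simp only [Finset.mem_Ici] at hk
        simp only [Finset.mem_filter, Finset.mem_univ, true_and]
        exact hb hk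
      have := Finset.card_le_card hsub
      rw [Fin.card_Ici] at this
      simp only at this
      omega
    have hcount := le_trans hlow (h2 μ)
    by_contra hcon
    push_neg at hcon
    have hsub2 : (Finset.univ.filter fun i : Fin n => a i ≤ μ)
        ⊆ Finset.Ioi (⟨n - 1 - (j : ℕ), by omega⟩ : Fin n) := by
      intro i hi
      simp only [Finset.mem_filter, Finset.mem_univ, true_and] at hi
      simp only [Finset.mem_Ioi]
      by_contra hle
      push_neg at hle
      exact absurd (le_trans (ha hle) hi) (not_le.mpr hcon)
    have := Finset.card_le_card hsub2
    rw [Fin.card_Ioi] at this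
    simp only at this
    omega
end

section
/- Let S and T be multisets of rational numbers such that for every μ ∈ ℚ, card(T^{≥μ}) ≤ card(S^{≥μ}). Then the sum (with multiplicity) of the elements of T^{≥0} is at most the sum of the elements of S^{≥0}. -/
/-!
Pair a largest element `t` of `T` with some `s ∈ S` with `t ≤ s` (one exists because `S` has at
least as many elements `≥ t` as `T`). Removing `t` and `s` preserves the dominance, since no
element of `T` exceeds `t`; inducting on `T` gives a matching of `T^{≥0}` with elements of `S`
that are at least as large.
-/

namespace Multiset

variable {α : Type*}

def SlopewiseDominates [LinearOrder α] (S T : Multiset α) : Prop :=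
  ∀ μ : α, (T.filter (μ ≤ ·)).card ≤ (S.filter (μ ≤ ·)).card

namespace SlopewiseDominates

section LinearOrder

variable [LinearOrder α] {S T : Multiset α}

theorem mono_right {T' : Multiset α} (h : S.SlopewiseDominates T) (hT : T' ≤ T) :
    S.SlopewiseDominates T' :=
  fun μ => (card_le_card (filter_le_filter _ hT)).trans (h μ)

theorem exists_ge (h : S.SlopewiseDominates T) {t : α} (ht : t ∈ T) : ∃ s ∈ S, t ≤ s := by
  have hpos : 0 < (S.filter (t ≤ ·)).card :=
    (card_pos_iff_exists_mem.mpr ⟨t, mem_filter.mpr ⟨ht, le_rfl⟩⟩).trans_le (h t)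
  obtain ⟨s, hs⟩ := card_pos_iff_exists_mem.mp hpos
  exact ⟨s, (mem_filter.mp hs).1, (mem_filter.mp hs).2⟩

theorem erase_erase (h : S.SlopewiseDominates T) {t s : α} (ht : t ∈ T)
    (ht_max : ∀ b ∈ T, b ≤ t) (hs : s ∈ S) (hts : t ≤ s) :
    (S.erase s).SlopewiseDominates (T.erase t) := by
  intro μ
  by_cases hμ : μ ≤ t
  · have hcard := h μ
    rw [← cons_erase ht, ← cons_erase hs, filter_cons_of_pos _ hμ,
      filter_cons_of_pos _ (hμ.trans hts), card_cons, card_cons] at hcard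
    exact Nat.le_of_succ_le_succ hcard
  · have hempty : (T.erase t).filter (μ ≤ ·) = 0 :=
      filter_eq_nil.mpr fun b hb hμb => hμ (hμb.trans (ht_max b (mem_of_mem_erase hb)))
    simp [hempty]

end LinearOrder

section OrderedAddMonoid

variable [AddCommMonoid α] [LinearOrder α] [IsOrderedAddMonoid α] {S T : Multiset α} {a : α}

theorem sum_le_sum_filter (h : S.SlopewiseDominates T) (ha : 0 ≤ a) (hT : ∀ t ∈ T, a ≤ t) :
    T.sum ≤ (S.filter (a ≤ ·)).sum := by
  induction T using strongInductionOn generalizing S with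
  | ih T ih =>
  rcases eq_or_ne T 0 with rfl | hT0
  · simpa using sum_nonneg fun s hs => ha.trans (mem_filter.mp hs).2
  obtain ⟨t, ht, ht_max⟩ := exists_max_image id hT0
  obtain ⟨s, hs, hts⟩ := h.exists_ge ht
  have hrest := ih _ (erase_lt.mpr ht) (h.erase_erase ht ht_max hs hts)
    fun b hb => hT b (mem_of_mem_erase hb)
  calc T.sum = t + (T.erase t).sum := (sum_erase ht).symm
    _ ≤ s + ((S.erase s).filter (a ≤ ·)).sum := add_le_add hts hrest
    _ = (S.filter (a ≤ ·)).sum := by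
      rw [← sum_cons, ← filter_cons_of_pos _ ((hT t ht).trans hts), cons_erase hs]

theorem sum_filter_le_sum_filter (h : S.SlopewiseDominates T) (ha : 0 ≤ a) :
    (T.filter (a ≤ ·)).sum ≤ (S.filter (a ≤ ·)).sum :=
  (h.mono_right (filter_le _ T)).sum_le_sum_filter ha fun _ ht => (mem_filter.mp ht).2

end OrderedAddMonoid

end SlopewiseDominates

end Multiset

/-- If for every `μ` the multiset `T` has at most as many elements `≥ μ`
as `S` does, then the sum of the nonnegative elements of `T` (with multiplicity)
is at most the sum of the nonnegative elements of `S`. -/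
theorem sum_nonneg_part_mono_of_slopewise_dominance
    (S T : Multiset ℚ)
    (h : ∀ μ : ℚ, (T.filter fun t => μ ≤ t).card ≤ (S.filter fun s => μ ≤ s).card) :
    (T.filter fun t => (0 : ℚ) ≤ t).sum ≤ (S.filter fun s => (0 : ℚ) ≤ s).sum :=
  Multiset.SlopewiseDominates.sum_filter_le_sum_filter h le_rfl
end

section
/- Let s be a positive integer, let r be an integer, and let A : ℚ × ℚ → ℚ × ℚ be the shear A(x,y) = (s·x, s·y + r·x). Let v : Fin n → ℚ × ℚ and w : Fin m → ℚ × ℚ be tuples all of whose first coordinates are positive. Then DV(A ∘ v, A ∘ w) = s² · DV(v, w). -/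
/-- Two-dimensional cross product. -/
def crossQ (u w : ℚ × ℚ) : ℚ := u.1 * w.2 - u.2 * w.1

/-- Slope of a vector. -/
def slopeQ (u : ℚ × ℚ) : ℚ := u.2 / u.1

/-- `DV v w` is the sum over all pairs `(i, j)` with `μ(v i) ≤ μ(w j)`
of `(v i) × (w j)`. -/
def DV {n m : ℕ} (v : Fin n → ℚ × ℚ) (w : Fin m → ℚ × ℚ) : ℚ :=
  ∑ i, ∑ j, if slopeQ (v i) ≤ slopeQ (w j) then crossQ (v i) (w j) else 0

/-- shearing by `A(x,y) = (s·x, s·y + r·x)` multiplies `DV` by `s²`. -/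
theorem DV_shear {n m : ℕ} (s : ℤ) (hs : 0 < s) (r : ℤ)
    (A : ℚ × ℚ → ℚ × ℚ)
    (hA : A = fun p => ((s : ℚ) * p.1, (s : ℚ) * p.2 + (r : ℚ) * p.1))
    (v : Fin n → ℚ × ℚ) (w : Fin m → ℚ × ℚ)
    (hv : ∀ i, 0 < (v i).1) (hw : ∀ j, 0 < (w j).1) :
    DV (A ∘ v) (A ∘ w) = (s : ℚ) ^ 2 * DV v w := by
  have hsQ : (0:ℚ) < (s:ℚ) := by exact_mod_cast hs
  have hslope : ∀ u : ℚ × ℚ, 0 < u.1 → slopeQ (A u) = slopeQ u + (r:ℚ)/(s:ℚ) := by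
    intro u hu
    subst hA
    simp only [slopeQ]
    field_simp
  have hcross : ∀ u u' : ℚ × ℚ, crossQ (A u) (A u') = (s:ℚ)^2 * crossQ u u' := by
    intro u u'
    subst hA
    simp only [crossQ]
    ring
  unfold DV
  rw [Finset.mul_sum]
  refine Finset.sum_congr rfl fun i _ => ?_
  rw [Finset.mul_sum]
  refine Finset.sum_congr rfl fun j _ => ?_
  simp only [Function.comp, hslope _ (hv i), hslope _ (hw j), add_le_add_iff_right,
    hcross]
  split <;> simp
end

section
/- Let p, q be natural numbers and let a : Fin p → ℚ and f : Fin q → ℚ be antitone. For μ ∈ ℚ set k_a(μ) := the number of indices i < p with a i ≤ μ, and k_f(μ) := the number of indices j < q with f j ≤ μ. Then the following two conditions are equivalent. (A): for every μ ∈ ℚ, k_f(μ) ≤ k_a(μ), and whenever k_f(μ) = k_a(μ) = k one has a (p−1−i) = f (q−1−i) for all i < k. (B): q ≤ p; a (p−i) ≤ f (q−i) for every i with 1 ≤ i ≤ q; and for every integer j with 1 ≤ j ≤ q, if [j = p, or (j < p and a (p−j) < a (p−j−1))] and [j = q, or (j < q and f (q−j) < f (q−j−1))], then either [j < p and a (p−j−1)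 ≤ f (q−j)] or [a (p−1−i) = f (q−1−i) for all i < j]. -/
/-!
For antitone slopes the indices `i` with `a i ≤ μ` form a final segment of `Fin p`, of
length `k_a(μ)`; hence `m ≤ k_a(μ)` iff `a (p - m) ≤ μ`. This turns the rank inequality of (A)
into the slope comparison of (B). The ranks can only agree at a common vertex: if
`k_f(μ) = k_a(μ) = k > 0`, then `-k` is a vertex of both polygons and
`a (p - k - 1) > μ ≥ f (q - k)`, so (B) forces the slopes to agree to the right of `-k`.
Conversely, at a common vertex `-j` with `f (q - j) < a (p - j - 1)`, both ranks at
`μ = f (q - j)` equal `j`.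
-/

open Finset

section Slopes

variable {α : Type*} [LinearOrder α] {n : ℕ} {a : Fin n → α}

theorem card_filter_fin_le (P : Fin n → Prop) [DecidablePred P] : #{i | P i} ≤ n :=
  (card_filter_le _ _).trans_eq (card_fin n)

theorem Antitone.apply_le_iff_sub_card_le (ha : Antitone a) (μ : α) (i : Fin n) :
    a i ≤ μ ↔ n - #{j | a j ≤ μ} ≤ i := by
  constructor
  · intro hi
    have : #(Ici i) ≤ #{j | a j ≤ μ} :=
      card_le_card fun j hj => by
        simp only [mem_Ici, mem_filter, mem_univ, true_and] at hj ⊢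
        exact (ha hj).trans hi
    rw [Fin.card_Ici] at this
    omega
  · intro hi
    by_contra! hlt
    have : #{j | a j ≤ μ} ≤ #(Ioi i) :=
      card_le_card fun j hj => by
        simp only [mem_Ioi, mem_filter, mem_univ, true_and] at hj ⊢
        by_contra! hji
        exact (hlt.trans_le (ha hji)).not_ge hj
    rw [Fin.card_Ioi] at this
    omega

theorem Antitone.le_card_filter_iff (ha : Antitone a) (μ : α) {m : ℕ} (hm₀ : 0 < m)
    (hm : m ≤ n) : m ≤ #{i | a i ≤ μ} ↔ a ⟨n - m, by omega⟩ ≤ μ := by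
  rw [ha.apply_le_iff_sub_card_le]
  have := card_filter_fin_le (a · ≤ μ)
  dsimp only
  omega

theorem Antitone.card_filter_le_of_lt_apply (ha : Antitone a) {μ : α} {m : ℕ} (hm : m < n)
    (hμ : μ < a ⟨n - m - 1, by omega⟩) : #{i | a i ≤ μ} ≤ m := by
  have := mt (ha.apply_le_iff_sub_card_le μ _).2 hμ.not_ge
  dsimp only at this
  omega

theorem Antitone.apply_sub_card_le (ha : Antitone a) (μ : α) (h₀ : 0 < #{i | a i ≤ μ}) :
    a ⟨n - #{i | a i ≤ μ}, by have := card_filter_fin_le (a · ≤ μ); omega⟩ ≤ μ :=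
  (ha.apply_le_iff_sub_card_le μ _).2 le_rfl

theorem Antitone.lt_apply_sub_card_sub_one (ha : Antitone a) (μ : α) (h : #{i | a i ≤ μ} < n) :
    μ < a ⟨n - #{i | a i ≤ μ} - 1, by omega⟩ := by
  rw [← not_le, ha.apply_le_iff_sub_card_le]
  dsimp only
  omega

/-- `-j` is a vertex of the polygon with slopes `a` (right endpoint at the origin): its left
endpoint, or a point where the slope drops strictly, from `a (n - j - 1)` on `[-j-1, -j]` to
`a (n - j)` on `[-j, -j+1]`. -/
def IsHNVertex (a : Fin n → α) (j : ℕ) : Prop :=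
  j = n ∨ (j < n ∧ ∀ (h1 : n - j < n) (h2 : n - j - 1 < n),
    a ⟨n - j, h1⟩ < a ⟨n - j - 1, h2⟩)

theorem Antitone.isHNVertex_card_filter (ha : Antitone a) (μ : α) (h₀ : 0 < #{i | a i ≤ μ}) :
    IsHNVertex a #{i | a i ≤ μ} := by
  obtain heq | hlt := (card_filter_fin_le (a · ≤ μ)).eq_or_lt
  · exact Or.inl heq
  · exact Or.inr ⟨hlt, fun _ _ =>
      (ha.apply_sub_card_le μ h₀).trans_lt (ha.lt_apply_sub_card_sub_one μ hlt)⟩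

theorem IsHNVertex.card_filter_le_apply_eq {m : ℕ} (hv : IsHNVertex a m) (ha : Antitone a)
    (hm₀ : 0 < m) (hm : m ≤ n) : #{i | a i ≤ a ⟨n - m, by omega⟩} = m := by
  refine le_antisymm ?_ ((ha.le_card_filter_iff _ hm₀ hm).2 le_rfl)
  obtain rfl | ⟨hlt, hstep⟩ := hv
  · exact card_filter_fin_le _
  · exact ha.card_filter_le_of_lt_apply hlt (hstep _ _)

end Slopes

section Conditions

variable {α : Type*} [LinearOrder α] {p q : ℕ}

/-- Condition (A), with `k_f(μ) = k_a(μ)` standing for `F^{≤μ} ≅ E^{≤μ}`. -/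
def HNRankCondition (a : Fin p → α) (f : Fin q → α) : Prop :=
  (∀ μ : α, #{j | f j ≤ μ} ≤ #{i | a i ≤ μ}) ∧
    ∀ μ : α, #{j | f j ≤ μ} = #{i | a i ≤ μ} → ∀ i < #{j | f j ≤ μ},
      ∀ (h1 : p - 1 - i < p) (h2 : q - 1 - i < q), a ⟨p - 1 - i, h1⟩ = f ⟨q - 1 - i, h2⟩

/-- Condition (B). -/
def HNPolygonCondition (a : Fin p → α) (f : Fin q → α) : Prop :=
  q ≤ p ∧
    (∀ i : ℕ, 1 ≤ i → i ≤ q → ∀ (h1 : p - i < p) (h2 : q - i < q),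
      a ⟨p - i, h1⟩ ≤ f ⟨q - i, h2⟩) ∧
    ∀ j : ℕ, 1 ≤ j → j ≤ q → IsHNVertex a j → IsHNVertex f j →
      (j < p ∧ ∀ (h1 : p - j - 1 < p) (h2 : q - j < q),
        a ⟨p - j - 1, h1⟩ ≤ f ⟨q - j, h2⟩) ∨
        ∀ i : ℕ, i < j → ∀ (h1 : p - 1 - i < p) (h2 : q - 1 - i < q),
          a ⟨p - 1 - i, h1⟩ = f ⟨q - 1 - i, h2⟩

variable {a : Fin p → α} {f : Fin q → α}

theorem HNRankCondition.hnPolygonCondition (h : HNRankCondition a f) (ha : Antitone a)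
    (hf : Antitone f) : HNPolygonCondition a f := by
  obtain ⟨hrank, hagree⟩ := h
  have hqp : q ≤ p := by
    obtain rfl | hq := q.eq_zero_or_pos
    · exact p.zero_le
    · have := (hf.le_card_filter_iff (f ⟨0, hq⟩) hq le_rfl).2 (hf (Nat.zero_le (q - q)))
      exact this.trans ((hrank _).trans (card_filter_fin_le _))
  have hslope : ∀ i : ℕ, 1 ≤ i → i ≤ q → ∀ (h1 : p - i < p) (h2 : q - i < q),
      a ⟨p - i, h1⟩ ≤ f ⟨q - i, h2⟩ := fun i hi hiq _ _ =>
    (ha.le_card_filter_iff _ hi (by omega)).1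
      (((hf.le_card_filter_iff _ hi hiq).2 le_rfl).trans (hrank _))
  refine ⟨hqp, hslope, fun j hj hjq _ hvf => or_iff_not_imp_left.2 fun hbelow => ?_⟩
  have hf_card := hvf.card_filter_le_apply_eq hf hj hjq
  have ha_card : #{i | a i ≤ f ⟨q - j, by omega⟩} = j := by
    refine le_antisymm ?_ (hf_card.ge.trans (hrank _))
    obtain rfl | hjp := (hqp.trans' hjq).eq_or_lt
    · exact card_filter_fin_le _
    · exact ha.card_filter_le_of_lt_apply hjp
        (not_le.1 fun hle => hbelow ⟨hjp, fun _ _ => hle⟩)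
  exact fun i hi => hagree _ (hf_card.trans ha_card.symm) i (by omega)

theorem HNPolygonCondition.hnRankCondition (h : HNPolygonCondition a f) (ha : Antitone a)
    (hf : Antitone f) : HNRankCondition a f := by
  obtain ⟨hqp, hslope, hvertex⟩ := h
  have hrank : ∀ μ : α, #{j | f j ≤ μ} ≤ #{i | a i ≤ μ} := by
    intro μ
    have hkq := card_filter_fin_le (f · ≤ μ)
    obtain hk | hk := (#{j | f j ≤ μ}).eq_zero_or_pos
    · exact hk ▸ Nat.zero_le _
    · exact (ha.le_card_filter_iff μ hk (by omega)).2
        ((hslope _ hk hkq _ _).trans (hf.apply_sub_card_le μ hk))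
  refine ⟨hrank, fun μ hcard i hi => ?_⟩
  have hk : 0 < #{j | f j ≤ μ} := by omega
  have hkq := card_filter_fin_le (f · ≤ μ)
  have hva := ha.isHNVertex_card_filter μ (hcard ▸ hk)
  rw [← hcard] at hva
  obtain ⟨hlt, hbelow⟩ | hagree :=
    hvertex _ hk hkq hva (hf.isHNVertex_card_filter μ hk)
  · have := (ha.apply_le_iff_sub_card_le μ _).1
      ((hbelow (by omega) (by omega)).trans (hf.apply_sub_card_le μ hk))
    dsimp only at this
    omega
  · exact hagree i hi

end Conditions

/-- equivalence of the two characterizations of quotient bundles,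
in terms of the antitone slope data `a : Fin p → ℚ` of `E` and `f : Fin q → ℚ` of `F`. -/
theorem quotient_conditions_equiv
    (p q : ℕ) (a : Fin p → ℚ) (f : Fin q → ℚ)
    (ha : Antitone a) (hf : Antitone f) :
    ((∀ μ : ℚ,
        (Finset.univ.filter fun j : Fin q => f j ≤ μ).card ≤
          (Finset.univ.filter fun i : Fin p => a i ≤ μ).card) ∧
      (∀ μ : ℚ,
        (Finset.univ.filter fun j : Fin q => f j ≤ μ).card =
            (Finset.univ.filter fun i : Fin p => a i ≤ μ).card →
          ∀ i : ℕ, i < (Finset.univ.filter fun j : Fin q => f j ≤ μ).card →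
            ∀ (h1 : p - 1 - i < p) (h2 : q - 1 - i < q),
              a ⟨p - 1 - i, h1⟩ = f ⟨q - 1 - i, h2⟩))
    ↔
    (q ≤ p ∧
      (∀ i : ℕ, 1 ≤ i → i ≤ q →
        ∀ (h1 : p - i < p) (h2 : q - i < q), a ⟨p - i, h1⟩ ≤ f ⟨q - i, h2⟩) ∧
      (∀ j : ℕ, 1 ≤ j → j ≤ q →
        (j = p ∨ (j < p ∧ ∀ (h1 : p - j < p) (h2 : p - j - 1 < p),
            a ⟨p - j, h1⟩ < a ⟨p - j - 1, h2⟩)) →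
        (j = q ∨ (j < q ∧ ∀ (h1 : q - j < q) (h2 : q - j - 1 < q),
            f ⟨q - j, h1⟩ < f ⟨q - j - 1, h2⟩)) →
        ((j < p ∧ ∀ (h1 : p - j - 1 < p) (h2 : q - j < q),
            a ⟨p - j - 1, h1⟩ ≤ f ⟨q - j, h2⟩) ∨
          (∀ i : ℕ, i < j → ∀ (h1 : p - 1 - i < p) (h2 : q - 1 - i < q),
            a ⟨p - 1 - i, h1⟩ = f ⟨q - 1 - i, h2⟩)))) :=
  ⟨fun h => HNRankCondition.hnPolygonCondition h ha hf,
    fun h => HNPolygonCondition.hnRankCondition h ha hf⟩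
end

section
/- Let E, F, Q be nonempty multisets of integers satisfying: (ii) for every μ ∈ ℤ, card(Q^{≤μ}) ≤ card(E^{≤μ}); (iii) for every μ ∈ ℤ, card(Q^{≥μ}) ≤ card(F^{≥μ}); (v) card(Q) = card(F). Let λ be the maximum element of Q and let F̄ be the image of F under the map t ↦ min t λ. Then: (a) for every μ ∈ ℤ, card(F̄^{≤μ}) ≤ card(E^{≤μ}); and (b) for every μ ∈ ℤ, card(Q^{≥μ}) ≤ card(F̄^{≥μ}). -/
/-! Clamping at `λ` leaves `F` unchanged below `λ`. There the lower counts of `F` are dominated by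
those of `Q`, since `card Q = card F` turns the upper-count condition into the reverse lower-count
inequality; at or above `λ` all of `F̄` and, as `Q ≤ λ`, all of `Q` are counted. For upper counts,
`F̄` agrees with `F` up to `λ`, and `Q` has nothing beyond `λ`. -/

namespace Multiset

theorem card_filter_map {α β : Type*} (S : Multiset α) (f : α → β) (p : β → Prop)
    [DecidablePred p] : ((S.map f).filter p).card = (S.filter (p ∘ f)).card := by
  rw [filter_map, card_map]

variable {α : Type*} [LinearOrder α]

theorem card_filter_le_add_card_filter_lt (S : Multiset α) (μ : α) :
    (S.filter (· ≤ μ)).card + (S.filter (μ < ·)).card = S.card := by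
  simp_rw [← not_le]
  rw [← card_add, filter_add_not]

theorem card_filter_le_le_of_card_filter_lt_le {S T : Multiset α} (hcard : S.card = T.card)
    {μ : α} (h : (S.filter (μ < ·)).card ≤ (T.filter (μ < ·)).card) :
    (T.filter (· ≤ μ)).card ≤ (S.filter (· ≤ μ)).card := by
  have hS := card_filter_le_add_card_filter_lt S μ
  have hT := card_filter_le_add_card_filter_lt T μ
  omega

theorem card_filter_map_min_le_of_le (S : Multiset α) {lam μ : α} (h : lam ≤ μ) :
    ((S.map (min · lam)).filter (· ≤ μ)).card = S.card := by
  rw [card_filter_map]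
  exact congrArg card (filter_eq_self.2 fun t _ => (min_le_right t lam).trans h)

theorem card_filter_map_min_le_of_lt (S : Multiset α) {lam μ : α} (h : μ < lam) :
    ((S.map (min · lam)).filter (· ≤ μ)).card = (S.filter (· ≤ μ)).card := by
  rw [card_filter_map]
  congr 1
  exact filter_congr fun t _ => by simp [h]

theorem card_filter_map_min_ge_of_le (S : Multiset α) {lam μ : α} (h : μ ≤ lam) :
    ((S.map (min · lam)).filter (μ ≤ ·)).card = (S.filter (μ ≤ ·)).card := by
  rw [card_filter_map]
  congr 1
  exact filter_congr fun t _ => by simp [h]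

end Multiset

open Multiset in
theorem max_slope_reduction_preserves_hypotheses_general
    (E F Q : Multiset ℤ)
    (h2 : ∀ μ : ℤ, (Q.filter fun t => t ≤ μ).card ≤ (E.filter fun t => t ≤ μ).card)
    (h3 : ∀ μ : ℤ, (Q.filter fun t => μ ≤ t).card ≤ (F.filter fun t => μ ≤ t).card)
    (h5 : Multiset.card Q = Multiset.card F)
    (lam : ℤ) (hlam' : ∀ t ∈ Q, t ≤ lam) :
    (∀ μ : ℤ, ((F.map fun t => min t lam).filter fun t => t ≤ μ).card ≤
        (E.filter fun t => t ≤ μ).card) ∧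
      (∀ μ : ℤ, (Q.filter fun t => μ ≤ t).card ≤
        ((F.map fun t => min t lam).filter fun t => μ ≤ t).card) := by
  have h3_lt (μ : ℤ) : (Q.filter (μ < ·)).card ≤ (F.filter (μ < ·)).card := by
    simpa only [Int.lt_iff_add_one_le] using h3 (μ + 1)
  refine ⟨fun μ => ?_, fun μ => ?_⟩
  · rcases le_or_gt lam μ with h | h
    · rw [card_filter_map_min_le_of_le F h, ← h5,
        ← filter_eq_self.2 fun t ht => (hlam' t ht).trans h]
      exact h2 μ
    · rw [card_filter_map_min_le_of_lt F h]
      exact (card_filter_le_le_of_card_filter_lt_le h5 (h3_lt μ)).trans (h2 μ)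
  · rcases le_or_gt μ lam with h | h
    · rw [card_filter_map_min_ge_of_le F h]
      exact h3 μ
    · rw [filter_eq_nil.2 fun t ht => not_le.2 ((hlam' t ht).trans_lt h)]
      exact Nat.zero_le _

/-- the hypotheses of the key inequality are preserved by the maximal
slope reduction `F̄` of `F` to `Q`: `card(F̄^{≤μ}) ≤ card(E^{≤μ})` and
`card(Q^{≥μ}) ≤ card(F̄^{≥μ})` for all `μ`. -/
theorem max_slope_reduction_preserves_hypotheses
    (E F Q : Multiset ℤ) (hE : E ≠ 0) (hF : F ≠ 0) (hQ : Q ≠ 0)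
    (h2 : ∀ μ : ℤ, (Q.filter fun t => t ≤ μ).card ≤ (E.filter fun t => t ≤ μ).card)
    (h3 : ∀ μ : ℤ, (Q.filter fun t => μ ≤ t).card ≤ (F.filter fun t => μ ≤ t).card)
    (h5 : Multiset.card Q = Multiset.card F)
    (lam : ℤ) (hlam : lam ∈ Q) (hlam' : ∀ t ∈ Q, t ≤ lam) :
    (∀ μ : ℤ, ((F.map fun t => min t lam).filter fun t => t ≤ μ).card ≤
        (E.filter fun t => t ≤ μ).card) ∧
      (∀ μ : ℤ, (Q.filter fun t => μ ≤ t).card ≤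
        ((F.map fun t => min t lam).filter fun t => μ ≤ t).card) :=
  max_slope_reduction_preserves_hypotheses_general E F Q h2 h3 h5 lam hlam'
end

section
/- Let n be a natural number and let F be a multiset of rational numbers. Let E₀ be the multiset consisting of n copies of 0. Then the following are equivalent: (a) for every μ ∈ ℚ, card(F^{≤μ}) ≤ card(E₀^{≤μ}), and whenever card(F^{≤μ}) = card(E₀^{≤μ}) the multisets F^{≤μ} and E₀^{≤μ} are equal; (b) every element of F is nonnegative, card(F) ≤ n, and if card(F) = n then F = E₀. -/
/-!
Testing the conditions at `μ = x` for an `x ∈ F` below `a` finds `x` on the left and nothing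
on the right, so `F ≥ a`; testing them at a `μ` above `a` and all of `F` compares `F` with all
of `replicate n a`. Conversely, below `a` both sides are empty, and above `a` the right side is
all of `replicate n a`, whose cardinality only `F` itself can reach.
-/

namespace Multiset

variable {α : Type*} [LinearOrder α]

/-- Harder–Narasimhan conditions for a quotient `F` of `E`, a bundle being encoded by the
multiset of its slopes. -/
def IsSlopeQuotient (F E : Multiset α) : Prop :=
  (∀ μ, card (F.filter (· ≤ μ)) ≤ card (E.filter (· ≤ μ))) ∧
    ∀ μ, card (F.filter (· ≤ μ)) = card (E.filter (· ≤ μ)) →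
      F.filter (· ≤ μ) = E.filter (· ≤ μ)

theorem filter_le_eq_zero_of_lt {F : Multiset α} {a μ : α} (hF : ∀ x ∈ F, a ≤ x) (hμ : μ < a) :
    F.filter (· ≤ μ) = 0 :=
  filter_eq_nil.2 fun x hx hxμ => (hF x hx).not_gt (hxμ.trans_lt hμ)

theorem exists_forall_mem_le_of_le (F : Multiset α) (a : α) : ∃ μ, a ≤ μ ∧ ∀ x ∈ F, x ≤ μ := by
  have : Nonempty α := ⟨a⟩
  obtain ⟨μ, hμ⟩ := (insert a F.toFinset).exists_le
  exact ⟨μ, hμ a (Finset.mem_insert_self _ _), fun x hx => hμ x (by simp [hx])⟩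

theorem le_of_mem_of_card_filter_le_replicate {F : Multiset α} {n : ℕ} {a : α}
    (h : ∀ μ, card (F.filter (· ≤ μ)) ≤ card ((replicate n a).filter (· ≤ μ))) :
    ∀ x ∈ F, a ≤ x := by
  intro x hx
  by_contra! hxa
  have hzero : (replicate n a).filter (· ≤ x) = 0 :=
    filter_le_eq_zero_of_lt (fun _ hb => (eq_of_mem_replicate hb).ge) hxa
  have hFx : F.filter (· ≤ x) = 0 := by simpa [hzero] using h x
  exact notMem_zero x (hFx ▸ mem_filter.2 ⟨hx, le_rfl⟩)

theorem isSlopeQuotient_replicate_iff {F : Multiset α} {n : ℕ} {a : α} :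
    IsSlopeQuotient F (replicate n a) ↔
      (∀ x ∈ F, a ≤ x) ∧ card F ≤ n ∧ (card F = n → F = replicate n a) := by
  have hEge : ∀ b ∈ replicate n a, a ≤ b := fun _ hb => (eq_of_mem_replicate hb).ge
  have hE : ∀ μ, a ≤ μ → (replicate n a).filter (· ≤ μ) = replicate n a := fun μ haμ =>
    filter_eq_self.2 fun _ hb => (eq_of_mem_replicate hb).trans_le haμ
  constructor
  · rintro ⟨hcard, heq⟩
    obtain ⟨μ, haμ, hFμ⟩ := exists_forall_mem_le_of_le F a
    have hcardμ := hcard μ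
    have heqμ := heq μ
    rw [filter_eq_self.2 hFμ, hE μ haμ, card_replicate] at hcardμ heqμ
    exact ⟨le_of_mem_of_card_filter_le_replicate hcard, hcardμ, heqμ⟩
  · rintro ⟨hge, hle, heq⟩
    refine ⟨fun μ => ?_, fun μ hμ => ?_⟩ <;> rcases lt_or_ge μ a with hμa | haμ
    · rw [filter_le_eq_zero_of_lt hge hμa, filter_le_eq_zero_of_lt hEge hμa]
    · rw [hE μ haμ, card_replicate]
      exact (card_le_card (filter_le _ _)).trans hle
    · rw [filter_le_eq_zero_of_lt hge hμa, filter_le_eq_zero_of_lt hEge hμa]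
    · simp only [hE μ haμ, card_replicate] at hμ ⊢
      have hFn : card F = n := hle.antisymm (hμ ▸ card_le_card (filter_le _ _))
      rw [← heq hFn]
      exact eq_of_le_of_card_le (filter_le _ _) (hFn.trans hμ.symm).le

end Multiset

/-- with `E₀` the multiset of `n` copies of `0`, the quotient-bundle
conditions relative to `E₀` hold for `F` iff every element of `F` is nonnegative,
`card F ≤ n`, and `F = E₀` when `card F = n`. -/
theorem globally_generated_classification
    (n : ℕ) (F : Multiset ℚ) (E₀ : Multiset ℚ) (hE₀ : E₀ = Multiset.replicate n 0) :
    ((∀ μ : ℚ, (F.filter fun t => t ≤ μ).card ≤ (E₀.filter fun t => t ≤ μ).card) ∧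
      (∀ μ : ℚ, (F.filter fun t => t ≤ μ).card = (E₀.filter fun t => t ≤ μ).card →
        F.filter (fun t => t ≤ μ) = E₀.filter fun t => t ≤ μ))
    ↔
    ((∀ x ∈ F, (0 : ℚ) ≤ x) ∧ Multiset.card F ≤ n ∧
      (Multiset.card F = n → F = E₀)) := by
  subst hE₀
  exact Multiset.isSlopeQuotient_replicate_iff
end
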